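/- In the one-sided shift space X = {0,1}^ℕ with metric d(x,y) = 2^{−inf{i : x_i ≠ y_i}}, the point 𝐚 defined by 𝐚(n) = 1 if n ∈ [3^k − 2^k, 3^k + 2^k] for some k and 0 otherwise is generic for the Dirac measure δ_𝟎 at the all-zeros sequence: for every continuous f : X → ℝ, lim_{N→∞} (1/N) ∑_{n=1}^N f(σ^n 𝐚) = f(𝟎), where σ is the left shift. -/

import Mathlib

open Filter Finset
open scoped Classical

/-- The left shift on `{0,1}^ℕ`. -/
def shift (x : ℕ → Bool) : ℕ → Bool := fun i => x (i + 1)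

lemma shift_iterate (a : ℕ → Bool) (n i : ℕ) : shift^[n] a i = a (n + i) := by
  induction n generalizing a with
  | zero => simp
  | succ n ih =>
    rw [Function.iterate_succ_apply, ih]
    show a (n + i + 1) = a (n + 1 + i)
    congr 1; omega

lemma sum_pow_bound : ∀ n : ℕ, ∑ k ∈ Finset.range n, (2 * 2 ^ k + 1) ≤ 2 ^ (n + 2) := by
  intro n
  induction n with
  | zero => simp
  | succ n ih =>
    rw [Finset.sum_range_succ]
    have h1 : (2:ℕ) ^ (n + 1 + 2) = 2 * 2 ^ (n + 2) := by ring
    have h2 : (2:ℕ) * 2 ^ n + 1 ≤ 2 ^ (n + 2) := by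
      have : (2:ℕ) ^ (n+2) = 4 * 2 ^ n := by ring
      have h3 : (1:ℕ) ≤ 2 ^ n := Nat.one_le_two_pow
      omega
    omega

/-- Number of ones up to `N` is at most `16 * 2 ^ log₃ N`. -/
lemma ones_card_le (a : ℕ → Bool)
    (ha : ∀ n, a n = true ↔ ∃ k : ℕ, 1 ≤ k ∧ 3 ^ k - 2 ^ k ≤ n ∧ n ≤ 3 ^ k + 2 ^ k)
    (N : ℕ) :
    ((Finset.Icc 1 N).filter (fun j => a j = true)).card ≤ 16 * 2 ^ Nat.log 3 N := by
  set L := Nat.log 3 N with hL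
  have hsub : (Finset.Icc 1 N).filter (fun j => a j = true) ⊆
      (Finset.range (L + 2)).biUnion (fun k => Finset.Icc (3 ^ k - 2 ^ k) (3 ^ k + 2 ^ k)) := by
    intro j hj
    simp only [Finset.mem_filter, Finset.mem_Icc] at hj
    obtain ⟨⟨hj1, hjN⟩, hja⟩ := hj
    obtain ⟨k, hk1, hklo, hkhi⟩ := (ha j).mp hja
    simp only [Finset.mem_biUnion, Finset.mem_range, Finset.mem_Icc]
    refine ⟨k, ?_, hklo, hkhi⟩
    obtain ⟨k', rfl⟩ := Nat.exists_eq_add_of_le hk1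
    have h2 : (2:ℕ) ^ k' ≤ 3 ^ k' := Nat.pow_le_pow_left (by norm_num) k'
    have hpow : (3:ℕ) ^ k' ≤ 3 ^ (1 + k') - 2 ^ (1 + k') := by
      have e3 : (3:ℕ) ^ (1 + k') = 3 * 3 ^ k' := by rw [pow_add]; ring
      have e2 : (2:ℕ) ^ (1 + k') = 2 * 2 ^ k' := by rw [pow_add]; ring
      omega
    have hle : (3:ℕ) ^ k' ≤ N := le_trans (le_trans hpow hklo) hjN
    have := Nat.le_log_of_pow_le (by norm_num : 1 < 3) hle
    omega
  calc ((Finset.Icc 1 N).filter (fun j => a j = true)).card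
      ≤ ((Finset.range (L + 2)).biUnion
          (fun k => Finset.Icc (3 ^ k - 2 ^ k) (3 ^ k + 2 ^ k))).card :=
        Finset.card_le_card hsub
    _ ≤ ∑ k ∈ Finset.range (L + 2), (Finset.Icc (3 ^ k - 2 ^ k) (3 ^ k + 2 ^ k)).card :=
        Finset.card_biUnion_le
    _ ≤ ∑ k ∈ Finset.range (L + 2), (2 * 2 ^ k + 1) := by
        refine Finset.sum_le_sum fun k _ => ?_
        rw [Nat.card_Icc]
        have h2 : (2:ℕ) ^ k ≤ 3 ^ k := Nat.pow_le_pow_left (by norm_num) k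
        omega
    _ ≤ 2 ^ (L + 2 + 2) := sum_pow_bound _
    _ = 16 * 2 ^ L := by ring

/-- The density of ones tends to zero. -/
lemma ones_density (a : ℕ → Bool)
    (ha : ∀ n, a n = true ↔ ∃ k : ℕ, 1 ≤ k ∧ 3 ^ k - 2 ^ k ≤ n ∧ n ≤ 3 ^ k + 2 ^ k) :
    Tendsto (fun N : ℕ =>
      (((Finset.Icc 1 N).filter (fun j => a j = true)).card : ℝ) / N) atTop (nhds 0) := by
  have hlog : Tendsto (fun N : ℕ => Nat.log 3 N) atTop atTop := by
    refine tendsto_atTop.2 fun b => ?_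
    filter_upwards [eventually_ge_atTop (3 ^ b)] with N hN
    calc b = Nat.log 3 (3 ^ b) := (Nat.log_pow (by norm_num) b).symm
      _ ≤ Nat.log 3 N := Nat.log_mono_right hN
  have hgeo : Tendsto (fun N : ℕ => 16 * (2 / 3 : ℝ) ^ Nat.log 3 N) atTop (nhds 0) := by
    have h0 : Tendsto (fun n : ℕ => (2 / 3 : ℝ) ^ n) atTop (nhds 0) :=
      tendsto_pow_atTop_nhds_zero_of_lt_one (by norm_num) (by norm_num)
    have := (h0.comp hlog).const_mul (16 : ℝ)
    simpa using this
  refine squeeze_zero' ?_ ?_ hgeo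
  · filter_upwards with N; positivity
  · filter_upwards [eventually_ge_atTop 1] with N hN
    have hN0 : N ≠ 0 := by omega
    have hpow : (3:ℕ) ^ Nat.log 3 N ≤ N := Nat.pow_log_le_self 3 hN0
    have hcard := ones_card_le a ha N
    have h1 : (((Finset.Icc 1 N).filter (fun j => a j = true)).card : ℝ) / N
        ≤ (16 * 2 ^ Nat.log 3 N : ℝ) / (3 ^ Nat.log 3 N : ℝ) := by
      apply div_le_div₀ (by positivity) ?_ (by positivity) ?_
      · exact_mod_cast hcard
      · exact_mod_cast hpow
    calc (((Finset.Icc 1 N).filter (fun j => a j = true)).card : ℝ) / N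
        ≤ (16 * 2 ^ Nat.log 3 N : ℝ) / (3 ^ Nat.log 3 N : ℝ) := h1
      _ = 16 * (2 / 3 : ℝ) ^ Nat.log 3 N := by
          rw [div_pow, mul_div_assoc]

/-- Eventually, the number of "bad" times up to `N` is at most `ε N`. -/
lemma bad_eventually (a : ℕ → Bool)
    (ha : ∀ n, a n = true ↔ ∃ k : ℕ, 1 ≤ k ∧ 3 ^ k - 2 ^ k ≤ n ∧ n ≤ 3 ^ k + 2 ^ k)
    (m : ℕ) (hm : 1 ≤ m) {ε : ℝ} (hε : 0 < ε) :
    ∀ᶠ N in atTop, (((Finset.Icc 1 N).filter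
      (fun n => ∃ i < m, a (n + i) = true)).card : ℝ) ≤ ε * N := by
  have hT := ones_density a ha
  have hsmall : ∀ᶠ M in atTop,
      (((Finset.Icc 1 M).filter (fun j => a j = true)).card : ℝ) / M < ε / (2 * m) := by
    have := hT.eventually (gt_mem_nhds (by positivity : (0:ℝ) < ε / (2 * m)))
    exact this
  obtain ⟨M0, hM0⟩ := eventually_atTop.mp hsmall
  filter_upwards [eventually_ge_atTop (max M0 m), eventually_ge_atTop 1] with N hN hN1
  have hNm : M0 ≤ N + m := le_trans (le_max_left _ _) (le_trans hN (Nat.le_add_right _ _))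
  have hmN : m ≤ N := le_trans (le_max_right _ _) hN
  -- card of bad set ≤ m * T (N + m)
  have hcard : ((Finset.Icc 1 N).filter (fun n => ∃ i < m, a (n + i) = true)).card
      ≤ m * ((Finset.Icc 1 (N + m)).filter (fun j => a j = true)).card := by
    have hsub : (Finset.Icc 1 N).filter (fun n => ∃ i < m, a (n + i) = true) ⊆
        (Finset.range m).biUnion
          (fun i => (Finset.Icc 1 N).filter (fun n => a (n + i) = true)) := by
      intro n hn
      simp only [Finset.mem_filter, Finset.mem_biUnion, Finset.mem_range] at *
      obtain ⟨hn1, i, hi, hai⟩ := hn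
      exact ⟨i, hi, hn1, hai⟩
    calc ((Finset.Icc 1 N).filter (fun n => ∃ i < m, a (n + i) = true)).card
        ≤ ((Finset.range m).biUnion
            (fun i => (Finset.Icc 1 N).filter (fun n => a (n + i) = true))).card :=
          Finset.card_le_card hsub
      _ ≤ ∑ i ∈ Finset.range m,
            ((Finset.Icc 1 N).filter (fun n => a (n + i) = true)).card :=
          Finset.card_biUnion_le
      _ ≤ ∑ _i ∈ Finset.range m,
            ((Finset.Icc 1 (N + m)).filter (fun j => a j = true)).card := by
          refine Finset.sum_le_sum fun i hi => ?_
          simp only [Finset.mem_range] at hi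
          refine Finset.card_le_card_of_injOn (fun n => n + i) ?_ ?_
          · intro n hn
            simp only [Finset.mem_coe, Finset.mem_filter, Finset.mem_Icc] at hn ⊢
            obtain ⟨⟨h1, h2⟩, h3⟩ := hn
            exact ⟨⟨by omega, by omega⟩, h3⟩
          · intro x _ y _ h
            exact add_left_injective i h
      _ = m * ((Finset.Icc 1 (N + m)).filter (fun j => a j = true)).card := by
          rw [Finset.sum_const, Finset.card_range, smul_eq_mul]
  have hTNm : (((Finset.Icc 1 (N + m)).filter (fun j => a j = true)).card : ℝ)
      ≤ ε / (2 * m) * ((N : ℝ) + m) := by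
    have h := hM0 (N + m) hNm
    push_cast at h
    have hpos : (0:ℝ) < (N : ℝ) + m := by
      have : (1:ℝ) ≤ (N : ℝ) := by exact_mod_cast hN1
      linarith
    rw [div_lt_iff₀ hpos] at h
    linarith
  have hmpos : (0:ℝ) < m := by exact_mod_cast hm
  have hNR : (1:ℝ) ≤ (N : ℝ) := by exact_mod_cast hN1
  have hmNR : (m : ℝ) ≤ (N : ℝ) := by exact_mod_cast hmN
  calc (((Finset.Icc 1 N).filter (fun n => ∃ i < m, a (n + i) = true)).card : ℝ)
      ≤ (m : ℝ) * (((Finset.Icc 1 (N + m)).filter (fun j => a j = true)).card : ℝ) := by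
        exact_mod_cast hcard
    _ ≤ (m : ℝ) * (ε / (2 * m) * ((N : ℝ) + m)) := by
        exact mul_le_mul_of_nonneg_left hTNm (le_of_lt hmpos)
    _ ≤ (m : ℝ) * (ε / (2 * m) * (2 * (N : ℝ))) := by
        have h1 : (0:ℝ) < ε / (2 * m) := by positivity
        have h2 : (N : ℝ) + m ≤ 2 * N := by linarith
        exact mul_le_mul_of_nonneg_left
          (mul_le_mul_of_nonneg_left h2 h1.le) hmpos.le
    _ = ε * N := by field_simp

/-- Continuity of `f` at the zero sequence, quantitative form. -/
lemma cont_near_zero (f : (ℕ → Bool) → ℝ) (hf : Continuous f) {ε : ℝ} (hε : 0 < ε) :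
    ∃ m : ℕ, ∀ x : ℕ → Bool, (∀ i < m, x i = false) →
      |f x - f (fun _ => false)| ≤ ε := by
  have h : Tendsto f (nhds (fun _ => false)) (nhds (f (fun _ => false))) :=
    hf.tendsto _
  have hball : f ⁻¹' Metric.ball (f (fun _ => false)) ε ∈ nhds (fun _ : ℕ => false) :=
    h (Metric.ball_mem_nhds _ hε)
  rw [nhds_pi] at hball
  rw [Filter.mem_pi'] at hball
  obtain ⟨I, t, ht, hsub⟩ := hball
  refine ⟨(I.sup id) + 1, fun x hx => ?_⟩
  have hxmem : x ∈ Set.pi (↑I) t := by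
    intro i hi
    have hfalse : (false : Bool) ∈ t i := by
      have := ht i
      rw [nhds_discrete] at this
      simpa using this
    have : x i = false := hx i (by
      have : i ≤ I.sup id := Finset.le_sup (f := id) hi
      omega)
    rw [this]
    exact hfalse
  have := hsub hxmem
  rw [Set.mem_preimage, Metric.mem_ball, Real.dist_eq] at this
  exact this.le

/-- In the shift space `{0,1}^ℕ`, the indicator sequence `𝐚` of
`⋃_{k ≥ 1} [3^k - 2^k, 3^k + 2^k]` is generic for the Dirac measure at the all-zeros
sequence: for every continuous `f`, the Birkhoff averages of `f` along the orbit of `𝐚`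
converge to `f(𝟎)`. -/
theorem indicator_sequence_generic_for_delta_zero (a : ℕ → Bool)
    (ha : ∀ n, a n = true ↔ ∃ k : ℕ, 1 ≤ k ∧ 3 ^ k - 2 ^ k ≤ n ∧ n ≤ 3 ^ k + 2 ^ k)
    (f : (ℕ → Bool) → ℝ) (hf : Continuous f) :
    Tendsto (fun N : ℕ => (1 / (N : ℝ)) * ∑ n ∈ Finset.Icc 1 N, f (shift^[n] a)) atTop
      (nhds (f fun _ => false)) := by
  -- a uniform bound on |f x - f 𝟎|
  obtain ⟨C0, hC0⟩ := (isCompact_univ : IsCompact (Set.univ : Set (ℕ → Bool))).exists_bound_of_continuousOn hf.continuousOn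
  set C : ℝ := 2 * C0 + 1 with hC
  have hCpos : 0 < C := by
    have := hC0 (fun _ => false) (Set.mem_univ _)
    have h0 : 0 ≤ C0 := le_trans (norm_nonneg _) this
    simp only [hC]; linarith
  have hCbound : ∀ x : ℕ → Bool, |f x - f (fun _ => false)| ≤ C := by
    intro x
    have h1 := hC0 x (Set.mem_univ _)
    have h2 := hC0 (fun _ => false) (Set.mem_univ _)
    rw [Real.norm_eq_abs] at h1 h2
    have := abs_sub (f x) (f (fun _ => false))
    calc |f x - f (fun _ => false)| ≤ |f x| + |f (fun _ => false)| := abs_sub _ _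
      _ ≤ C := by simp only [hC]; linarith
  rw [Metric.tendsto_atTop]
  intro ε hε
  -- continuity at 𝟎
  obtain ⟨m, hm⟩ := cont_near_zero f hf (show (0:ℝ) < ε / 4 by linarith)
  -- bad-set density bound
  have hbad := bad_eventually a ha (m + 1) (by omega)
    (show (0:ℝ) < ε / (4 * C) by positivity)
  obtain ⟨N0, hN0⟩ := eventually_atTop.mp hbad
  refine ⟨max N0 1, fun N hN => ?_⟩
  have hN1 : 1 ≤ N := le_trans (le_max_right _ _) hN
  have hNN0 : N0 ≤ N := le_trans (le_max_left _ _) hN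
  have hNpos : (0:ℝ) < N := by exact_mod_cast hN1
  set B := (Finset.Icc 1 N).filter (fun n => ∃ i < m + 1, a (n + i) = true) with hB
  have hBbound : (B.card : ℝ) ≤ ε / (4 * C) * N := hN0 N hNN0
  rw [Real.dist_eq]
  have key : (1 / (N : ℝ)) * ∑ n ∈ Finset.Icc 1 N, f (shift^[n] a) - f (fun _ => false)
      = (1 / (N : ℝ)) * ∑ n ∈ Finset.Icc 1 N, (f (shift^[n] a) - f (fun _ => false)) := by
    rw [Finset.sum_sub_distrib, Finset.sum_const, Nat.card_Icc]
    have : ((N + 1 - 1 : ℕ) : ℝ) = (N : ℝ) := by push_cast; ring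
    rw [nsmul_eq_mul, this]
    field_simp
  rw [key, abs_mul, abs_of_nonneg (by positivity : (0:ℝ) ≤ 1 / (N:ℝ))]
  have habs : |∑ n ∈ Finset.Icc 1 N, (f (shift^[n] a) - f (fun _ => false))|
      ≤ ∑ n ∈ Finset.Icc 1 N, |f (shift^[n] a) - f (fun _ => false)| :=
    Finset.abs_sum_le_sum_abs _ _
  have hsplit : ∑ n ∈ Finset.Icc 1 N, |f (shift^[n] a) - f (fun _ => false)|
      ≤ (B.card : ℝ) * C + (N : ℝ) * (ε / 4) := by
    rw [← Finset.sum_filter_add_sum_filter_not (Finset.Icc 1 N)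
      (fun n => ∃ i < m + 1, a (n + i) = true), ← hB]
    have h1 : ∑ n ∈ B, |f (shift^[n] a) - f (fun _ => false)| ≤ (B.card : ℝ) * C := by
      have := Finset.sum_le_card_nsmul B
        (fun n => |f (shift^[n] a) - f (fun _ => false)|) C (fun n _ => hCbound _)
      simpa [nsmul_eq_mul] using this
    have h2 : ∑ n ∈ (Finset.Icc 1 N).filter
          (fun n => ¬∃ i < m + 1, a (n + i) = true),
          |f (shift^[n] a) - f (fun _ => false)| ≤ (N : ℝ) * (ε / 4) := by
      have hgood : ∀ n ∈ (Finset.Icc 1 N).filter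
          (fun n => ¬∃ i < m + 1, a (n + i) = true),
          |f (shift^[n] a) - f (fun _ => false)| ≤ ε / 4 := by
        intro n hn
        simp only [Finset.mem_filter, not_exists, not_and] at hn
        refine hm _ (fun i hi => ?_)
        rw [shift_iterate]
        have := hn.2 i (by omega)
        exact Bool.eq_false_iff.mpr this
      calc ∑ n ∈ (Finset.Icc 1 N).filter
            (fun n => ¬∃ i < m + 1, a (n + i) = true),
            |f (shift^[n] a) - f (fun _ => false)|
          ≤ ∑ _n ∈ (Finset.Icc 1 N).filter
            (fun n => ¬∃ i < m + 1, a (n + i) = true), (ε / 4) :=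
            Finset.sum_le_sum hgood
        _ = ((Finset.Icc 1 N).filter
            (fun n => ¬∃ i < m + 1, a (n + i) = true)).card * (ε / 4) := by
            rw [Finset.sum_const, nsmul_eq_mul]
        _ ≤ (N : ℝ) * (ε / 4) := by
            apply mul_le_mul_of_nonneg_right ?_ (by linarith)
            have hle : ((Finset.Icc 1 N).filter
                (fun n => ¬∃ i < m + 1, a (n + i) = true)).card ≤ N := by
              calc _ ≤ (Finset.Icc 1 N).card := Finset.card_filter_le _ _
                _ = N := by rw [Nat.card_Icc]; omega
            exact_mod_cast hle
    exact add_le_add h1 h2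
  have hfinal : (1 / (N:ℝ)) * ∑ n ∈ Finset.Icc 1 N,
      |f (shift^[n] a) - f (fun _ => false)| ≤ ε / 2 := by
    have hBC : (B.card : ℝ) * C ≤ ε / 4 * N := by
      calc (B.card : ℝ) * C ≤ (ε / (4 * C) * N) * C :=
            mul_le_mul_of_nonneg_right hBbound hCpos.le
        _ = ε / 4 * N := by field_simp
    calc (1 / (N:ℝ)) * ∑ n ∈ Finset.Icc 1 N, |f (shift^[n] a) - f (fun _ => false)|
        ≤ (1 / (N:ℝ)) * ((B.card : ℝ) * C + (N : ℝ) * (ε / 4)) := by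
          apply mul_le_mul_of_nonneg_left hsplit (by positivity)
      _ ≤ (1 / (N:ℝ)) * (ε / 4 * N + (N : ℝ) * (ε / 4)) := by
          apply mul_le_mul_of_nonneg_left (by linarith) (by positivity)
      _ = ε / 2 := by field_simp; ring
  calc (1 / (N:ℝ)) * |∑ n ∈ Finset.Icc 1 N, (f (shift^[n] a) - f (fun _ => false))|
      ≤ (1 / (N:ℝ)) * ∑ n ∈ Finset.Icc 1 N, |f (shift^[n] a) - f (fun _ => false)| :=
        mul_le_mul_of_nonneg_left habs (by positivity)
    _ ≤ ε / 2 := hfinal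
    _ < ε := by linarith
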